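/- arXiv:2605.16542 — 5 statements merged into one kernel-verified Lean document; each statement's English description precedes it below -/
import Mathlib

section
/- Let G be a simple graph and let S ⊆ V(G) be an independent set. If G → (2,3,3)^v, then G − S → (3,3)^v, where G − S is the induced subgraph of G on V(G) ∖ S. -/
/-- `G → (a₁, …, a_k)ᵛ`: every `k`-coloring of the vertices of `G` contains,
for some color `i`, a clique of size `a i` all of whose vertices get color `i`. -/
def VertexArrows {V : Type*} (G : SimpleGraph V) {k : ℕ} (a : Fin k → ℕ) : Prop :=
  ∀ c : V → Fin k, ∃ i : Fin k, ∃ s : Finset V, G.IsNClique (a i) s ∧ ∀ v ∈ s, c v = i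

lemma aux_lift {V : Type*} (G : SimpleGraph V) (S : Set V) [DecidablePred (· ∈ Sᶜ)]
    (s : Finset V) (hsub : ∀ v ∈ s, v ∈ Sᶜ) (n : ℕ) (hclique : G.IsNClique n s) :
    (G.induce Sᶜ).IsNClique n (s.subtype (· ∈ Sᶜ)) := by
  constructor
  · intro a ha b hb hab
    simp only [Finset.mem_coe, Finset.mem_subtype] at ha hb
    exact hclique.1 ha hb (fun hh => hab (Subtype.ext hh))
  · rw [Finset.card_subtype, Finset.filter_true_of_mem hsub]
    exact hclique.2

theorem stmt_2 {V : Type*} (G : SimpleGraph V) (S : Set V)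
    (hS : ∀ x ∈ S, ∀ y ∈ S, ¬ G.Adj x y)
    (h : VertexArrows G ![2, 3, 3]) :
    VertexArrows (G.induce Sᶜ) ![3, 3] := by
  classical
  intro c
  set c' : V → Fin 3 := fun v =>
    if hv : v ∈ S then 0 else (c ⟨v, hv⟩).succ with hc'
  obtain ⟨i, s, hclique, hcol⟩ := h c'
  have notS : ∀ j : Fin 2, (∀ v ∈ s, c' v = j.succ) → ∀ v ∈ s, v ∈ Sᶜ := by
    intro j hj v hv
    intro hvS
    have := hj v hv
    simp [hc', hvS] at this
    exact (Fin.succ_ne_zero j) this.symm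
  have key : ∀ j : Fin 2, (∀ v ∈ s, c' v = j.succ) → G.IsNClique 3 s →
      ∃ i : Fin 2, ∃ t : Finset ↥Sᶜ,
        (G.induce Sᶜ).IsNClique (![3,3] i) t ∧ ∀ v ∈ t, c v = i := by
    intro j hj hcl
    refine ⟨j, s.subtype (· ∈ Sᶜ), ?_, ?_⟩
    · have : (![3,3] j : ℕ) = 3 := by fin_cases j <;> rfl
      rw [this]
      exact aux_lift G S s (notS j hj) 3 hcl
    · intro v hv
      simp only [Finset.mem_subtype] at hv
      have h1 := hj v.1 hv
      have h2 : v.1 ∉ S := notS j hj v.1 hv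
      simp only [hc', dif_neg h2] at h1
      have := Fin.succ_injective _ h1
      rwa [Subtype.coe_eta] at this
  fin_cases i
  · exfalso
    have h2 : s.card = 2 := hclique.2
    obtain ⟨x, y, hxy, rfl⟩ := Finset.card_eq_two.mp h2
    have hadj : G.Adj x y := hclique.1 (by simp) (by simp) hxy
    have hx : x ∈ S := by
      have := hcol x (by simp)
      by_contra hx
      simp only [hc', dif_neg hx] at this
      exact Fin.succ_ne_zero _ this
    have hy : y ∈ S := by
      have := hcol y (by simp)
      by_contra hy
      simp only [hc', dif_neg hy] at this
      exact Fin.succ_ne_zero _ this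
    exact hS x hx y hy hadj
  · exact key 0 hcol hclique
  · exact key 1 hcol hclique
end

section
/- Let G be a simple graph and let S ⊆ V(G) be an independent set. If G → (3,3,3)^v, then G − S → (2,3,3)^v, where G − S is the induced subgraph of G on V(G) ∖ S. (Proof idea: given a good coloring of G − S with an independent first class X_1, the class X_1 ∪ S of G is bipartite and hence K_3-free.) -/
theorem stmt_3 {V : Type*} (G : SimpleGraph V) (S : Set V)
    (hS : ∀ x ∈ S, ∀ y ∈ S, ¬ G.Adj x y)
    (h : VertexArrows G ![3, 3, 3]) :
    VertexArrows (G.induce Sᶜ) ![2, 3, 3] := by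
  classical
  intro c
  set c' : V → Fin 3 := fun v => if hv : v ∈ Sᶜ then c ⟨v, hv⟩ else 0 with hc'
  obtain ⟨i, s, hclique, hcol⟩ := h c'
  have hsize : s.card = 3 := by
    have := hclique.card_eq
    fin_cases i <;> simpa using this
  by_cases hi : i = 0
  · subst hi
    -- at most one vertex of s lies in S
    have hfil : (s.filter (· ∈ S)).card ≤ 1 := by
      by_contra hcon
      push_neg at hcon
      obtain ⟨x, hx, y, hy, hxy⟩ := Finset.one_lt_card.mp hcon
      simp only [Finset.mem_filter] at hx hy
      exact hS x hx.2 y hy.2 (hclique.1 hx.1 hy.1 hxy)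
    have hfil2 : 2 ≤ (s.filter (· ∉ S)).card := by
      have := Finset.card_filter_add_card_filter_not (s := s) (p := (· ∈ S))
      omega
    obtain ⟨x, hx, y, hy, hxy⟩ := Finset.one_lt_card.mp (by omega : 1 < (s.filter (· ∉ S)).card)
    simp only [Finset.mem_filter] at hx hy
    have hadj : G.Adj x y := hclique.1 hx.1 hy.1 hxy
    refine ⟨0, {⟨x, hx.2⟩, ⟨y, hy.2⟩}, ⟨?_, ?_⟩, ?_⟩
    · intro a ha b hb hab
      simp only [Finset.coe_insert, Set.mem_insert_iff, Finset.coe_singleton,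
        Finset.mem_singleton, Set.mem_singleton_iff] at ha hb
      rcases ha with ha | ha <;> rcases hb with hb | hb <;> subst ha <;> subst hb
      · exact absurd rfl hab
      · exact hadj
      · exact hadj.symm
      · exact absurd rfl hab
    · rw [Finset.card_insert_of_notMem (by simp [hxy]), Finset.card_singleton]
      rfl
    · intro v hv
      simp only [Finset.mem_insert, Finset.mem_singleton] at hv
      rcases hv with hv | hv <;> subst hv
      · have := hcol x hx.1
        simpa [hc', hx.2] using this
      · have := hcol y hy.1
        simpa [hc', hy.2] using this
  · -- color i ≠ 0 : no vertex of s is in S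
    have hnS : ∀ v ∈ s, v ∈ Sᶜ := by
      intro v hv
      intro hvS
      have := hcol v hv
      simp only [hc'] at this
      rw [dif_neg (by simpa using hvS)] at this
      exact hi this.symm
    refine ⟨i, s.subtype (· ∈ Sᶜ), ⟨?_, ?_⟩, ?_⟩
    · intro a ha b hb hab
      simp only [Finset.mem_coe, Finset.mem_subtype] at ha hb
      exact hclique.1 ha hb (fun e => hab (Subtype.ext e))
    · rw [Finset.card_subtype, Finset.filter_true_of_mem hnS, hsize]
      fin_cases i <;> simp_all
    · intro v hv
      rw [Finset.mem_subtype] at hv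
      have := hcol v hv
      simp only [hc'] at this
      rwa [dif_pos v.2] at this
end

section
/- Let G be a simple graph and let G′ be the cone over G, i.e., the graph obtained from G by adding one new vertex v adjacent to every vertex of G. If G → (3,3)^v, then G′ → (3,3)^e. -/
/-- `G → (3,3)ᵛ`: every 2-coloring of the vertices of `G` contains three pairwise
adjacent vertices of the same color. -/
def VertexArrows33 {V : Type*} (G : SimpleGraph V) : Prop :=
  ∀ c : V → Bool, ∃ x y z : V,
    G.Adj x y ∧ G.Adj x z ∧ G.Adj y z ∧ c x = c y ∧ c y = c z

/-- `G → (3,3)ᵉ`: every 2-coloring of the edges of `G` contains three pairwise adjacent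
vertices whose three connecting edges all have the same color. -/
def EdgeArrows33 {V : Type*} (G : SimpleGraph V) : Prop :=
  ∀ c : Sym2 V → Bool, ∃ x y z : V,
    G.Adj x y ∧ G.Adj x z ∧ G.Adj y z ∧
    c s(x, y) = c s(x, z) ∧ c s(x, z) = c s(y, z)

/-- The cone over `G`: a new vertex (`none`) adjacent to every vertex of `G`. -/
def cone {V : Type*} (G : SimpleGraph V) : SimpleGraph (Option V) :=
  SimpleGraph.fromRel
    (fun x y => x = none ∨ ∃ u v, x = some u ∧ y = some v ∧ G.Adj u v)

/-!
Colour each vertex `u` of `G` by the colour of the spoke `s(none, some u)` of the cone. A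
triangle `xyz` of `G` that is monochromatic for this vertex colouring has three spokes of one
colour `k`: if an edge of `xyz` also has colour `k` it closes a monochromatic triangle with the
apex, and otherwise all three edges of `xyz` have the other colour.
-/

lemma Bool.eq_of_ne_of_ne {a b d : Bool} (ha : a ≠ d) (hb : b ≠ d) : a = b := by
  cases a <;> cases b <;> cases d <;> simp_all

section Cone

variable {V : Type*} {G : SimpleGraph V}

lemma cone_adj_none_some (u : V) : (cone G).Adj none (some u) :=
  ⟨(Option.some_ne_none u).symm, Or.inl (Or.inl rfl)⟩

lemma cone_adj_some_some {u v : V} (huv : G.Adj u v) : (cone G).Adj (some u) (some v) :=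
  ⟨by simp [huv.ne], Or.inl (Or.inr ⟨u, v, rfl, rfl, huv⟩)⟩

lemma exists_mono_triangle_cone_of_mono_spokes (c : Sym2 (Option V) → Bool) {x y z : V}
    (hxy : G.Adj x y) (hxz : G.Adj x z) (hyz : G.Adj y z)
    (hx : c s(none, some x) = c s(none, some y)) (hy : c s(none, some y) = c s(none, some z)) :
    ∃ a b d : Option V, (cone G).Adj a b ∧ (cone G).Adj a d ∧ (cone G).Adj b d ∧
      c s(a, b) = c s(a, d) ∧ c s(a, d) = c s(b, d) := by
  by_cases exy : c s(some x, some y) = c s(none, some x)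
  · exact ⟨none, some x, some y, cone_adj_none_some x, cone_adj_none_some y,
      cone_adj_some_some hxy, hx, hx ▸ exy.symm⟩
  by_cases exz : c s(some x, some z) = c s(none, some x)
  · exact ⟨none, some x, some z, cone_adj_none_some x, cone_adj_none_some z,
      cone_adj_some_some hxz, hx.trans hy, (hx.trans hy) ▸ exz.symm⟩
  by_cases eyz : c s(some y, some z) = c s(none, some x)
  · exact ⟨none, some y, some z, cone_adj_none_some y, cone_adj_none_some z,
      cone_adj_some_some hyz, hy, hy ▸ hx ▸ eyz.symm⟩
  exact ⟨some x, some y, some z, cone_adj_some_some hxy, cone_adj_some_some hxz,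
    cone_adj_some_some hyz, Bool.eq_of_ne_of_ne exy exz, Bool.eq_of_ne_of_ne exz eyz⟩

end Cone

theorem stmt_4 {V : Type*} (G : SimpleGraph V) (h : VertexArrows33 G) :
    EdgeArrows33 (cone G) := by
  intro c
  obtain ⟨x, y, z, hxy, hxz, hyz, hx, hy⟩ := h (fun u => c s(none, some u))
  exact exists_mono_triangle_cone_of_mono_spokes c hxy hxz hyz hx hy
end

section
/- If G is a C_4-free simple graph, then the cone over G (the graph obtained from G by adding one new vertex adjacent to every vertex of G) is W_5-free. -/
/-- `G` is `H`-free: `G` contains no (not necessarily induced) subgraph isomorphic to `H`,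
i.e. there is no injective graph homomorphism from `H` to `G`. -/
def HFree {W V : Type*} (H : SimpleGraph W) (G : SimpleGraph V) : Prop :=
  ¬ ∃ f : H →g G, Function.Injective f

/-- `C₄`, the cycle on four vertices: edges `{i, i+1}` in `Fin 4`. -/
def C4 : SimpleGraph (Fin 4) :=
  SimpleGraph.fromRel (fun i j => j = i + 1)

/-- `W₅`, the wheel on five vertices: the hub `0` is adjacent to `1,2,3,4`,
which form the 4-cycle `1-2-3-4-1`. -/
def W5 : SimpleGraph (Fin 5) :=
  SimpleGraph.fromRel (fun i j =>
    i = 0 ∨ (i = 1 ∧ j = 2) ∨ (i = 2 ∧ j = 3) ∨ (i = 3 ∧ j = 4) ∨ (i = 4 ∧ j = 1))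

/-- An edge of the cone between two `some` vertices comes from an edge of `G`. -/
lemma cone_adj_some {V : Type*} {G : SimpleGraph V} {u v : V}
    (h : (cone G).Adj (some u) (some v)) : G.Adj u v := by
  rw [cone, SimpleGraph.fromRel_adj] at h
  simp only [Option.some.injEq, reduceCtorEq, false_or] at h
  obtain ⟨hne, h | h⟩ := h
  · obtain ⟨a, b, ha, hb, hab⟩ := h
    subst ha; subst hb; exact hab
  · obtain ⟨a, b, ha, hb, hab⟩ := h
    subst ha; subst hb; exact hab.symm

/-- A 4-cycle `a-b-c-d-a` with distinct vertices yields a copy of `C4`. -/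
lemma c4_cycle {V : Type*} {G : SimpleGraph V} {a b c d : V}
    (hab : G.Adj a b) (hbc : G.Adj b c) (hcd : G.Adj c d) (hda : G.Adj d a)
    (hac : a ≠ c) (hbd : b ≠ d) : ¬ HFree C4 G := by
  intro hfree
  apply hfree
  have hba := hab.symm; have hcb := hbc.symm; have hdc := hcd.symm; have had := hda.symm
  have h1 : a ≠ b := hab.ne
  have h2 : b ≠ c := hbc.ne
  have h3 : c ≠ d := hcd.ne
  have h4 : d ≠ a := hda.ne
  refine ⟨⟨![a,b,c,d], ?_⟩, ?_⟩
  · intro i j hij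
    have hij' : i ≠ j ∧ ((j : Fin 4) = i + 1 ∨ i = j + 1) := hij
    fin_cases i <;> fin_cases j <;>
      first
        | exact hab | exact hba | exact hbc | exact hcb
        | exact hcd | exact hdc | exact hda | exact had
        | exact absurd hij' (by decide)
  · intro i j hij
    fin_cases i <;> fin_cases j <;>
      first
        | rfl
        | exact absurd hij h1 | exact absurd hij h1.symm
        | exact absurd hij h2 | exact absurd hij h2.symm
        | exact absurd hij h3 | exact absurd hij h3.symm
        | exact absurd hij h4 | exact absurd hij h4.symm
        | exact absurd hij hac | exact absurd hij hac.symm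
        | exact absurd hij hbd | exact absurd hij hbd.symm

theorem stmt_5 {V : Type*} (G : SimpleGraph V) (h : HFree C4 G) :
    HFree W5 (cone G) := by
  rintro ⟨f, hf⟩
  have w01 : W5.Adj 0 1 := ⟨by decide, by decide⟩
  have w02 : W5.Adj 0 2 := ⟨by decide, by decide⟩
  have w03 : W5.Adj 0 3 := ⟨by decide, by decide⟩
  have w04 : W5.Adj 0 4 := ⟨by decide, by decide⟩
  have w12 : W5.Adj 1 2 := ⟨by decide, by decide⟩
  have w23 : W5.Adj 2 3 := ⟨by decide, by decide⟩
  have w34 : W5.Adj 3 4 := ⟨by decide, by decide⟩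
  have w41 : W5.Adj 4 1 := ⟨by decide, by decide⟩
  have key : ∀ i j : Fin 5, W5.Adj i j → ∀ u v, f i = some u → f j = some v → G.Adj u v := by
    intro i j hij u v hu hv
    have := f.map_adj hij
    rw [hu, hv] at this
    exact cone_adj_some this
  have hne : ∀ i j : Fin 5, i ≠ j → f i ≠ f j := fun i j hij e => hij (hf e)
  cases h1 : f 1 with
  | some w1 =>
    cases h2 : f 2 with
    | some w2 =>
      cases h3 : f 3 with
      | some w3 =>
        cases h4 : f 4 with
        | some w4 =>
          exact c4_cycle (key 1 2 w12 _ _ h1 h2) (key 2 3 w23 _ _ h2 h3)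
            (key 3 4 w34 _ _ h3 h4) (key 4 1 w41 _ _ h4 h1)
            (fun e => hne 1 3 (by decide) (by rw [h1, h3, e]))
            (fun e => hne 2 4 (by decide) (by rw [h2, h4, e])) h
        | none =>
          obtain ⟨w0, h0⟩ := Option.ne_none_iff_exists'.mp
            (fun e => hne 0 4 (by decide) (e.trans h4.symm))
          exact c4_cycle (key 0 1 w01 _ _ h0 h1) (key 1 2 w12 _ _ h1 h2)
            (key 2 3 w23 _ _ h2 h3) (key 3 0 w03.symm _ _ h3 h0)
            (fun e => hne 0 2 (by decide) (by rw [h0, h2, e]))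
            (fun e => hne 1 3 (by decide) (by rw [h1, h3, e])) h
      | none =>
        obtain ⟨w0, h0⟩ := Option.ne_none_iff_exists'.mp
          (fun e => hne 0 3 (by decide) (e.trans h3.symm))
        cases h4 : f 4 with
        | some w4 =>
          exact c4_cycle (key 0 4 w04 _ _ h0 h4) (key 4 1 w41 _ _ h4 h1)
            (key 1 2 w12 _ _ h1 h2) (key 2 0 w02.symm _ _ h2 h0)
            (fun e => hne 0 1 (by decide) (by rw [h0, h1, e]))
            (fun e => hne 4 2 (by decide) (by rw [h4, h2, e])) h
        | none => exact (hne 3 4 (by decide) (h3.trans h4.symm)).elim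
    | none =>
      obtain ⟨w0, h0⟩ := Option.ne_none_iff_exists'.mp
        (fun e => hne 0 2 (by decide) (e.trans h2.symm))
      cases h3 : f 3 with
      | some w3 =>
        cases h4 : f 4 with
        | some w4 =>
          exact c4_cycle (key 0 3 w03 _ _ h0 h3) (key 3 4 w34 _ _ h3 h4)
            (key 4 1 w41 _ _ h4 h1) (key 1 0 w01.symm _ _ h1 h0)
            (fun e => hne 0 4 (by decide) (by rw [h0, h4, e]))
            (fun e => hne 3 1 (by decide) (by rw [h3, h1, e])) h
        | none => exact (hne 2 4 (by decide) (h2.trans h4.symm)).elim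
      | none => exact (hne 2 3 (by decide) (h2.trans h3.symm)).elim
  | none =>
    cases h2 : f 2 with
    | some w2 =>
      cases h3 : f 3 with
      | some w3 =>
        cases h4 : f 4 with
        | some w4 =>
          obtain ⟨w0, h0⟩ := Option.ne_none_iff_exists'.mp
            (fun e => hne 0 1 (by decide) (e.trans h1.symm))
          exact c4_cycle (key 0 2 w02 _ _ h0 h2) (key 2 3 w23 _ _ h2 h3)
            (key 3 4 w34 _ _ h3 h4) (key 4 0 w04.symm _ _ h4 h0)
            (fun e => hne 0 3 (by decide) (by rw [h0, h3, e]))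
            (fun e => hne 2 4 (by decide) (by rw [h2, h4, e])) h
        | none => exact (hne 1 4 (by decide) (h1.trans h4.symm)).elim
      | none => exact (hne 1 3 (by decide) (h1.trans h3.symm)).elim
    | none => exact (hne 1 2 (by decide) (h1.trans h2.symm)).elim
end

section
/- Let G be a simple graph with G → (3,3)^e and let e be an edge of G that belongs to at most one triangle of G. Then G − e → (3,3)^e, where G − e is G with the edge e deleted. Consequently, in a minimal graph arrowing (3,3)^e every edge belongs to at least two triangles. (Theorem 1.1, part 2.) -/
lemma key_part1 {V : Type*} (G : SimpleGraph V) (harr : EdgeArrows33 G)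
    (x y : V) (hxy : G.Adj x y)
    (huniq : ∀ z w : V, G.Adj x z → G.Adj y z → G.Adj x w → G.Adj y w → z = w) :
    EdgeArrows33 (G.deleteEdges {s(x, y)}) := by
  classical
  intro c
  set b : Bool := if h : ∃ z, G.Adj x z ∧ G.Adj y z then !c s(x, h.choose) else true with hb
  set c' : Sym2 V → Bool := fun e => if e = s(x, y) then b else c e with hc'
  have sw : ∀ a b : V, c' s(a, b) = c' s(b, a) := fun a b => by rw [Sym2.eq_swap]
  have hcxy : c' s(x, y) = b := by rw [hc']; simp
  -- no monochromatic triangle (under c') contains the edge s(x,y)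
  have hne : ∀ u v w : V, G.Adj u v → G.Adj u w → G.Adj v w → s(u, v) = s(x, y) →
      c' s(u, v) = c' s(u, w) → c' s(u, w) = c' s(v, w) → False := by
    intro u v w huv huw hvw heq m1 m2
    have hcases := (Sym2.eq_iff).mp heq
    have hxw : G.Adj x w ∧ G.Adj y w := by
      rcases hcases with ⟨h1, h2⟩ | ⟨h1, h2⟩
      · rw [h1] at huw; rw [h2] at hvw; exact ⟨huw, hvw⟩
      · rw [h1] at huw; rw [h2] at hvw; exact ⟨hvw, huw⟩
    have hz : ∃ z, G.Adj x z ∧ G.Adj y z := ⟨w, hxw⟩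
    have hzspec := hz.choose_spec
    have hwz : hz.choose = w := huniq _ _ hzspec.1 hzspec.2 hxw.1 hxw.2
    have hbval : b = !c s(x, w) := by rw [hb, dif_pos hz, hwz]
    have hxwne : s(x, w) ≠ s(x, y) := by
      intro h
      rcases Sym2.eq_iff.mp h with ⟨_, h2⟩ | ⟨h1, _⟩
      · exact hxw.2.ne' h2
      · exact hxy.ne h1
    have hcxw : c' s(x, w) = c s(x, w) := by rw [hc']; simp [hxwne]
    rcases hcases with ⟨h1, h2⟩ | ⟨h1, h2⟩
    · rw [h1, h2] at m1 m2
      rw [hcxy, hbval, hcxw] at m1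
      simp at m1
    · rw [h1, h2] at m1 m2
      rw [hcxw] at m2
      rw [sw y x, hcxy, hbval] at m1
      simpa using m1.trans m2
  obtain ⟨p, q, r, hpq, hpr, hqr, m1, m2⟩ := harr c'
  have e1 : s(p, q) ≠ s(x, y) := fun h => hne p q r hpq hpr hqr h m1 m2
  have e2 : s(p, r) ≠ s(x, y) := by
    intro h
    refine hne p r q hpr hpq hqr.symm h m1.symm ?_
    calc c' s(p, q) = c' s(q, r) := m1.trans m2
    _ = c' s(r, q) := sw q r
  have e3 : s(q, r) ≠ s(x, y) := by
    intro h
    refine hne q r p hqr hpq.symm hpr.symm h ?_ ?_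
    · calc c' s(q, r) = c' s(p, q) := (m1.trans m2).symm
      _ = c' s(q, p) := sw p q
    · calc c' s(q, p) = c' s(p, q) := sw q p
      _ = c' s(p, r) := m1
      _ = c' s(r, p) := sw p r
  have cc : ∀ a b_ : V, s(a, b_) ≠ s(x, y) → c s(a, b_) = c' s(a, b_) := by
    intro a b_ h; rw [hc']; simp [h]
  refine ⟨p, q, r, ?_, ?_, ?_, ?_, ?_⟩
  · rw [SimpleGraph.deleteEdges_adj]; exact ⟨hpq, by simpa using e1⟩
  · rw [SimpleGraph.deleteEdges_adj]; exact ⟨hpr, by simpa using e2⟩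
  · rw [SimpleGraph.deleteEdges_adj]; exact ⟨hqr, by simpa using e3⟩
  · rw [cc p q e1, cc p r e2]; exact m1
  · rw [cc p r e2, cc q r e3]; exact m2

theorem stmt_9 {V : Type*} (G : SimpleGraph V) (harr : EdgeArrows33 G) :
    -- If an edge `{x, y}` of `G` belongs to at most one triangle, then `G - e → (3,3)ᵉ`.
    (∀ x y : V, G.Adj x y →
      (∀ z w : V, G.Adj x z → G.Adj y z → G.Adj x w → G.Adj y w → z = w) →
      EdgeArrows33 (G.deleteEdges {s(x, y)})) ∧
    -- Consequently, if `G` is minimal, every edge of `G` belongs to at least two triangles.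
    ((∀ x y : V, G.Adj x y → ¬ EdgeArrows33 (G.deleteEdges {s(x, y)})) →
      ∀ x y : V, G.Adj x y → ∃ z w : V, z ≠ w ∧
        G.Adj x z ∧ G.Adj y z ∧ G.Adj x w ∧ G.Adj y w) := by
  constructor
  · intro x y hxy huniq
    exact key_part1 G harr x y hxy huniq
  · intro hmin x y hxy
    by_contra hcon
    push_neg at hcon
    apply hmin x y hxy
    apply key_part1 G harr x y hxy
    intro z w hxz hyz hxw hyw
    by_contra hzw
    exact hcon z w hzw hxz hyz hxw hyw
end
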